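/- Let Q be a natural number, let K₀ and C be real numbers with K₀ ≠ 0, and let f : ℕ → ℝ be such that f(S) ≠ 0 for some S with 0 ≤ S ≤ Q. Suppose that: (i) for every s with 0 ≤ s ≤ Q, the sum over S from s to Q of f(S)·C(S,s)·(2K₀·(Q − S·(s+2)/(s+1) + s/(s+1)) + C) equals 0; and (ii) for every r with 0 ≤ r ≤ Q, the sum over R from r to Q of f(Q−R)·C(R,r)·(2K₀·(Q − R·(r+2)/(r+1) + r/(r+1)) + C) equals 0. Then f(0) = f(1) = ··· = f(Q), i.e. f is constant on {0, 1, ..., Q}; in other words, under optimized coupling the matter distribution is necessarily homogeneous. -/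

import Mathlib

/-!
Since `S C(S,s) = (s+1) C(S,s+1) + s C(S,s)`, constraint (i) is the first-order recurrence
`(ℓ - s) a(s) = (s+2) a(s+1)`, `ℓ = Q + C/(2K₀)`, for the binomial moments
`a(s) = ∑_{S ≤ Q} f(S) C(S,s)`, which vanish at `s = Q + 1` and determine `f` on `{0, …, Q}`.
As `f ≠ 0`, `a(0) ≠ 0`, so the recurrence can only reach zero if `ℓ = m ∈ {0, …, Q}`; its
solutions are then proportional to `C(m+1, s+1)`, which by the hockey-stick identity are the
moments of the indicator of `{0, …, m}`. Constraint (ii) says the same of `f(Q - ·)`, with the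
same `m`, and the two shapes are compatible with `f(0) ≠ 0` only when `m = Q`.
-/

open Finset

theorem Nat.cast_add_one_mul_choose_succ (n k : ℕ) :
    ((k : ℝ) + 1) * (n.choose (k + 1) : ℝ) = ((n : ℝ) - k) * (n.choose k : ℝ) := by
  rcases le_or_gt k n with hkn | hnk
  · have h := congrArg (Nat.cast (R := ℝ)) (Nat.choose_succ_right_eq n k)
    push_cast [hkn] at h
    linarith
  · simp [Nat.choose_eq_zero_of_lt hnk, Nat.choose_eq_zero_of_lt (hnk.trans (Nat.lt_succ_self k))]

theorem Nat.sum_range_choose_eq_choose_succ (m s : ℕ) :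
    ∑ S ∈ range (m + 1), S.choose s = (m + 1).choose (s + 1) := by
  induction m with
  | zero => rcases s with _ | s <;> simp [Nat.choose_eq_zero_of_lt]
  | succ m ih => rw [sum_range_succ, ih, Nat.choose_succ_succ' (m + 1), add_comm]

noncomputable def binomialMoment (Q : ℕ) (f : ℕ → ℝ) (s : ℕ) : ℝ :=
  ∑ S ∈ range (Q + 1), f S * (S.choose s : ℝ)

theorem binomialMoment_succ (Q : ℕ) (f : ℕ → ℝ) (s : ℕ) :
    binomialMoment (Q + 1) f s = binomialMoment Q f s + f (Q + 1) * ((Q + 1).choose s : ℝ) :=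
  sum_range_succ _ _

theorem binomialMoment_eq_zero_of_lt {Q s : ℕ} (f : ℕ → ℝ) (hQs : Q < s) :
    binomialMoment Q f s = 0 :=
  sum_eq_zero fun S hS => by
    rw [Nat.choose_eq_zero_of_lt ((mem_range.1 hS).trans_le hQs), Nat.cast_zero, mul_zero]

theorem eq_of_binomialMoment_eq {Q : ℕ} {f g : ℕ → ℝ}
    (h : ∀ s ≤ Q, binomialMoment Q f s = binomialMoment Q g s) : ∀ S ≤ Q, f S = g S := by
  induction Q with
  | zero =>
    intro S hS
    simpa [binomialMoment, Nat.le_zero.1 hS] using h 0 le_rfl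
  | succ Q ih =>
    have htop : f (Q + 1) = g (Q + 1) := by
      simpa [binomialMoment_succ, binomialMoment_eq_zero_of_lt _ (Nat.lt_succ_self Q)]
        using h (Q + 1) le_rfl
    have hlow : ∀ s ≤ Q, binomialMoment Q f s = binomialMoment Q g s := fun s hs => by
      simpa [binomialMoment_succ, htop] using h s (hs.trans Q.le_succ)
    intro S hS
    rcases Nat.of_le_succ hS with hSQ | rfl
    · exact ih hlow S hSQ
    · exact htop

theorem binomialMoment_indicator {Q m : ℕ} (hmQ : m ≤ Q) (c : ℝ) (s : ℕ) :
    binomialMoment Q (fun S => if S ≤ m then c else 0) s =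
      c * ((m + 1).choose (s + 1) : ℝ) := by
  have hsub : range (m + 1) ⊆ range (Q + 1) := range_subset_range.2 (Nat.succ_le_succ hmQ)
  rw [binomialMoment, ← sum_subset hsub, ← Nat.sum_range_choose_eq_choose_succ, Nat.cast_sum,
    mul_sum]
  · exact sum_congr rfl fun S hS => by rw [if_pos (Nat.lt_succ_iff.1 (mem_range.1 hS))]
  · intro S _ hS
    rw [if_neg (by simpa using hS), zero_mul]

def MomentRecurrence (ℓ : ℝ) (n : ℕ) (a : ℕ → ℝ) : Prop :=
  ∀ s < n, (ℓ - s) * a s = ((s : ℝ) + 2) * a (s + 1)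

namespace MomentRecurrence

variable {ℓ : ℝ} {n : ℕ} {a b : ℕ → ℝ}

theorem choose_succ (m : ℕ) (n : ℕ) :
    MomentRecurrence m n fun s => ((m + 1).choose (s + 1) : ℝ) := fun s _ => by
  have h := Nat.cast_add_one_mul_choose_succ (m + 1) (s + 1)
  push_cast at h
  linear_combination -h

-- The recurrence determines `a (s + 1)` from `a s`, as `s + 2 ≠ 0`.
theorem proportional (ha : MomentRecurrence ℓ n a) (hb : MomentRecurrence ℓ n b) :
    ∀ s ≤ n, b 0 * a s = a 0 * b s := by
  intro s
  induction s with
  | zero => intro _; ring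
  | succ s ih =>
    intro hs
    have hs2 : (s : ℝ) + 2 ≠ 0 := by positivity
    apply mul_left_cancel₀ hs2
    linear_combination (ℓ - s) * ih (Nat.le_of_succ_le hs) - b 0 * ha s hs + a 0 * hb s hs

theorem eq_zero_of_zero (ha : MomentRecurrence ℓ n a) (h0 : a 0 = 0) : ∀ s ≤ n, a s = 0 := by
  intro s
  induction s with
  | zero => exact fun _ => h0
  | succ s ih =>
    intro hs
    have h := ha s hs
    rw [ih (Nat.le_of_succ_le hs), mul_zero, eq_comm, mul_eq_zero] at h
    exact h.resolve_left (by positivity)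

-- A solution with `a 0 ≠ 0` can only drop to zero at `s + 1` when `ℓ = s`.
theorem exists_eq_natCast (ha : MomentRecurrence ℓ n a) (h0 : a 0 ≠ 0) (hn : a n = 0) :
    ∃ m < n, ℓ = m := by
  by_contra! hℓ
  have hne : ∀ s ≤ n, a s ≠ 0 := by
    intro s
    induction s with
    | zero => exact fun _ => h0
    | succ s ih =>
      intro hs has
      have hsn : s < n := hs
      have h := ha s hsn
      rw [has, mul_zero] at h
      exact (mul_ne_zero (sub_ne_zero.2 (hℓ s hsn)) (ih hsn.le)) h
  exact hne n le_rfl hn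

end MomentRecurrence

def BoundaryConstraint (Q : ℕ) (K₀ C : ℝ) (f : ℕ → ℝ) : Prop :=
  ∀ s : ℕ, s ≤ Q →
    ∑ S ∈ Finset.Icc s Q,
      f S * (Nat.choose S s : ℝ) *
        (2 * K₀ * ((Q : ℝ) - (S : ℝ) * ((s : ℝ) + 2) / ((s : ℝ) + 1) + (s : ℝ) / ((s : ℝ) + 1))
          + C) = 0

section BoundaryConstraint

variable {Q : ℕ} {K₀ C : ℝ} {f : ℕ → ℝ}

theorem binomialMoment_recurrence_of_constraint (h1 : BoundaryConstraint Q K₀ C f) {s : ℕ}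
    (hs : s ≤ Q) :
    (2 * K₀ * ((Q : ℝ) - s) + C) * binomialMoment Q f s
      = 2 * K₀ * ((s : ℝ) + 2) * binomialMoment Q f (s + 1) := by
  have h := h1 s hs
  have hsub : Icc s Q ⊆ range (Q + 1) := fun S hS =>
    mem_range.2 (Nat.lt_succ_of_le (mem_Icc.1 hS).2)
  rw [sum_subset hsub fun S _ hS => by
    rw [Nat.choose_eq_zero_of_lt (by simp_all), Nat.cast_zero, mul_zero, zero_mul]] at h
  rw [binomialMoment, binomialMoment, mul_sum, mul_sum, ← sub_eq_zero, ← sum_sub_distrib, ← h]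
  refine sum_congr rfl fun S _ => ?_
  have hpascal := Nat.cast_add_one_mul_choose_succ S s
  field_simp
  linear_combination (-(2 * K₀ * ((s : ℝ) + 2) * f S)) * hpascal

theorem momentRecurrence_of_constraint (hK : K₀ ≠ 0)
    (h1 : BoundaryConstraint Q K₀ C f) :
    MomentRecurrence (Q + C / (2 * K₀)) (Q + 1) (binomialMoment Q f) := fun s hs => by
  have h := binomialMoment_recurrence_of_constraint h1 (Nat.lt_succ_iff.1 hs)
  field_simp
  linear_combination h

theorem eq_indicator_of_constraint (hK : K₀ ≠ 0) (hf : ∃ S : ℕ, S ≤ Q ∧ f S ≠ 0)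
    (h1 : BoundaryConstraint Q K₀ C f) :
    ∃ m ≤ Q, (m : ℝ) = Q + C / (2 * K₀) ∧
      ∃ c ≠ 0, ∀ S ≤ Q, f S = if S ≤ m then c else 0 := by
  have hrec := momentRecurrence_of_constraint hK h1
  have ha0 : binomialMoment Q f 0 ≠ 0 := by
    intro ha0
    obtain ⟨S, hSQ, hfS⟩ := hf
    refine hfS (eq_of_binomialMoment_eq (g := 0) (fun s hs => ?_) S hSQ)
    rw [hrec.eq_zero_of_zero ha0 s (hs.trans Q.le_succ)]
    simp [binomialMoment]
  obtain ⟨m, hmQ, hm⟩ :=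
    hrec.exists_eq_natCast ha0 (binomialMoment_eq_zero_of_lt f (Nat.lt_succ_self Q))
  have hm1 : (m : ℝ) + 1 ≠ 0 := by positivity
  refine ⟨m, Nat.lt_succ_iff.1 hmQ, hm.symm, binomialMoment Q f 0 / (m + 1), div_ne_zero ha0 hm1,
    eq_of_binomialMoment_eq fun s hs => ?_⟩
  have hprop :=
    hrec.proportional (hm ▸ MomentRecurrence.choose_succ m (Q + 1)) s (hs.trans Q.le_succ)
  rw [binomialMoment_indicator (Nat.lt_succ_iff.1 hmQ)]
  rw [Nat.choose_one_right] at hprop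
  push_cast at hprop
  field_simp
  linear_combination hprop

end BoundaryConstraint

/-- Under the boundary constraints (4.5a) and (4.6) with `ξ₀ = 1` and `K₀ ≠ 0`,
any nontrivial solution `f` is constant on `{0, 1, …, Q}`: the matter
distribution is necessarily homogeneous. -/
theorem stmt_3 (Q : ℕ) (K₀ C : ℝ) (hK : K₀ ≠ 0) (f : ℕ → ℝ)
    (hf : ∃ S : ℕ, S ≤ Q ∧ f S ≠ 0)
    (h1 : ∀ s : ℕ, s ≤ Q →
      ∑ S ∈ Finset.Icc s Q,
        f S * (Nat.choose S s : ℝ) *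
          (2 * K₀ * ((Q : ℝ) - (S : ℝ) * ((s : ℝ) + 2) / ((s : ℝ) + 1) + (s : ℝ) / ((s : ℝ) + 1))
            + C) = 0)
    (h2 : ∀ r : ℕ, r ≤ Q →
      ∑ R ∈ Finset.Icc r Q,
        f (Q - R) * (Nat.choose R r : ℝ) *
          (2 * K₀ * ((Q : ℝ) - (R : ℝ) * ((r : ℝ) + 2) / ((r : ℝ) + 1) + (r : ℝ) / ((r : ℝ) + 1))
            + C) = 0) :
    ∀ i : ℕ, i ≤ Q → ∀ j : ℕ, j ≤ Q → f i = f j := by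
  have hf' : ∃ R : ℕ, R ≤ Q ∧ f (Q - R) ≠ 0 := by
    obtain ⟨S, hSQ, hfS⟩ := hf
    exact ⟨Q - S, Nat.sub_le Q S, by rwa [Nat.sub_sub_self hSQ]⟩
  obtain ⟨m, -, hm, c, hc, hfm⟩ := eq_indicator_of_constraint hK hf h1
  obtain ⟨m', -, hm', _, -, hfm'⟩ :=
    eq_indicator_of_constraint (f := fun R => f (Q - R)) hK hf' h2
  obtain rfl : m = m' := by exact_mod_cast hm.trans hm'.symm
  have hmQ : Q ≤ m := by
    by_contra hQm
    have hf0 := hfm' Q le_rfl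
    rw [if_neg hQm, Nat.sub_self, hfm 0 (Nat.zero_le Q), if_pos (Nat.zero_le m)] at hf0
    exact hc hf0
  intro i hi j hj
  rw [hfm i hi, hfm j hj, if_pos (hi.trans hmQ), if_pos (hj.trans hmQ)]
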